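/- In an AL-monoid, metric betweenness has transitivity t₂: if (a,b,c)M and (a,d,b)M then (a,d,c)M. -/
import Mathlib


/-- An Autometrized lattice ordered monoid (AL-monoid). -/
class ALMonoid (A : Type*) extends Lattice A, AddCommMonoid A where
  amul : A → A → A
  add_le_add_left' : ∀ a b : A, a ≤ b → ∀ c : A, c + a ≤ c + b
  amul_core : ∀ a b : A, amul a (a ⊓ b) + b = a ⊔ b
  add_contract : ∀ a x y : A, amul (a + x) (a + y) ≤ amul x y
  sup_contract : ∀ a x y : A, amul (a ⊔ x) (a ⊔ y) ≤ amul x y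
  inf_contract : ∀ a x y : A, amul (a ⊓ x) (a ⊓ y) ≤ amul x y
  amul_contract : ∀ a x y : A, amul (amul a x) (amul a y) ≤ amul x y
  inf_amul_sup : ∀ a b : A, amul a (a ⊔ b) ⊓ amul b (a ⊔ b) = 0
  amul_nonneg : ∀ a b : A, 0 ≤ amul a b
  amul_eq_zero_iff : ∀ a b : A, amul a b = 0 ↔ a = b
  amul_comm : ∀ a b : A, amul a b = amul b a
  amul_triangle : ∀ a b c : A, amul a b ≤ amul a c + amul c b

open ALMonoid

infixl:70 " ⋆ " => ALMonoid.amul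

theorem stmt6 {A : Type*} [ALMonoid A]
    (hcanc : ∀ x y c : A, x + c ≤ y + c → x ≤ y)
    (a b c d : A)
    (h1 : a ⋆ b + b ⋆ c = a ⋆ c) (h2 : a ⋆ d + d ⋆ b = a ⋆ b) :
    a ⋆ d + d ⋆ c = a ⋆ c := by
  apply le_antisymm
  · calc a ⋆ d + d ⋆ c ≤ a ⋆ d + (d ⋆ b + b ⋆ c) :=
          add_le_add_left' _ _ (amul_triangle d c b) _
      _ = a ⋆ d + d ⋆ b + b ⋆ c := by rw [add_assoc]
      _ = a ⋆ c := by rw [h2, h1]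
  · exact amul_triangle a c d
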